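/- arXiv:2309.09516 — 3 statements merged into one kernel-verified Lean document; each statement's English description precedes it below -/
import Mathlib

section
/- Let X = X₁ - X₂ for independent X₁ ~ Gamma(α₁, β₁), X₂ ~ Gamma(α₂, β₂) with α₁, α₂, β₁, β₂ > 0 and α₁ not an integer in [1,k]. Then E[X^k] = β₁^{-k} (∏_{i=1}^k (α₁ + i - 1)) · ₂F₁(-k, α₂; -(α₁ + k - 1); -β₁/β₂), where ₂F₁(-k, b; c; z) = Σ_{l=0}^{k} ((-k)_l (b)_l / (l! (c)_l)) z^l is the finite hypergeometric polynomial sum with rising Pochhammer symbols. -/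
open MeasureTheory ProbabilityTheory Real Finset
open scoped ENNReal NNReal

/-- Gamma function shift by a natural number. -/
lemma my_Gamma_add_nat {a : ℝ} (ha : 0 < a) (m : ℕ) :
    Real.Gamma (a + m) = (ascPochhammer ℝ m).eval a * Real.Gamma a := by
  induction m with
  | zero => simp
  | succ m ih =>
      have h : a + (m + 1 : ℕ) = (a + m) + 1 := by push_cast; ring
      rw [h, Real.Gamma_add_one (by positivity), ih, ascPochhammer_succ_eval]
      ring

lemma my_integrableOn (a r : ℝ) (ha : 0 < a) (hr : 0 < r) :
    IntegrableOn (fun x : ℝ => x ^ (a - 1) * Real.exp (-(r * x))) (Set.Ioi 0) := by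
  have := integrableOn_rpow_mul_exp_neg_mul_rpow (p := 1) (s := a - 1) (b := r)
    (by linarith) zero_lt_one hr
  simpa [Real.rpow_one] using this

lemma gammaMeasure_pow_integrable {a r : ℝ} (ha : 0 < a) (hr : 0 < r) (m : ℕ) :
    Integrable (fun x : ℝ => x ^ m) (gammaMeasure a r) := by
  have hpdf : gammaPDF a r = fun x => ENNReal.ofReal (gammaPDFReal a r x) := rfl
  rw [gammaMeasure, hpdf, integrable_withDensity_iff
    ((measurable_gammaPDFReal a r).ennreal_ofReal)
    (Filter.Eventually.of_forall fun x => ENNReal.ofReal_lt_top)]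
  have hre : (fun x : ℝ => x ^ m * (ENNReal.ofReal (gammaPDFReal a r x)).toReal)
      = fun x : ℝ => x ^ m * gammaPDFReal a r x := by
    funext x
    rw [ENNReal.toReal_ofReal (gammaPDFReal_nonneg ha hr x)]
  rw [hre]
  have hIoi : IntegrableOn (fun x : ℝ => x ^ m * gammaPDFReal a r x) (Set.Ioi 0) := by
    have h2 : IntegrableOn
        (fun x : ℝ => (r ^ a / Real.Gamma a) * (x ^ (a + m - 1) * Real.exp (-(r * x))))
        (Set.Ioi 0) := (my_integrableOn (a + m) r (by positivity) hr).const_mul _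
    refine h2.congr_fun (fun x hx => ?_) measurableSet_Ioi
    have hx0 : (0:ℝ) < x := hx
    rw [gammaPDFReal, if_pos hx0.le]
    beta_reduce
    rw [show a + m - 1 = (m : ℝ) + (a - 1) by ring, Real.rpow_add hx0,
      Real.rpow_natCast]
    ring
  have hIci : IntegrableOn (fun x : ℝ => x ^ m * gammaPDFReal a r x) (Set.Ici 0) := by
    rwa [integrableOn_Ici_iff_integrableOn_Ioi]
  refine hIci.integrable_of_forall_notMem_eq_zero (fun x hx => ?_)
  have hx0 : x < 0 := by simpa using hx
  rw [gammaPDFReal, if_neg (not_le.mpr hx0), mul_zero]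

lemma gammaMeasure_pow_integral {a r : ℝ} (ha : 0 < a) (hr : 0 < r) (m : ℕ) :
    ∫ x, x ^ m ∂(gammaMeasure a r) = (ascPochhammer ℝ m).eval a / r ^ m := by
  have hmeas : Measurable fun x : ℝ => (gammaPDFReal a r x).toNNReal :=
    (measurable_gammaPDFReal a r).real_toNNReal
  have h0 : gammaMeasure a r
      = volume.withDensity (fun x => ((gammaPDFReal a r x).toNNReal : ℝ≥0∞)) := rfl
  rw [h0, integral_withDensity_eq_integral_smul hmeas]
  have h1 : (fun x : ℝ => (gammaPDFReal a r x).toNNReal • x ^ m)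
      = fun x : ℝ => gammaPDFReal a r x * x ^ m := by
    funext x
    rw [NNReal.smul_def, Real.coe_toNNReal _ (gammaPDFReal_nonneg ha hr x), smul_eq_mul]
  rw [h1]
  have hint : Integrable (fun x : ℝ => gammaPDFReal a r x * x ^ m) := by
    have := gammaMeasure_pow_integrable ha hr m
    have hpdf : gammaPDF a r = fun x => ENNReal.ofReal (gammaPDFReal a r x) := rfl
    rw [gammaMeasure, hpdf, integrable_withDensity_iff
      ((measurable_gammaPDFReal a r).ennreal_ofReal)
      (Filter.Eventually.of_forall fun x => ENNReal.ofReal_lt_top)] at this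
    refine this.congr (Filter.Eventually.of_forall fun x => ?_)
    show x ^ m * (ENNReal.ofReal (gammaPDFReal a r x)).toReal = gammaPDFReal a r x * x ^ m
    rw [ENNReal.toReal_ofReal (gammaPDFReal_nonneg ha hr x)]
    ring
  have hsplit : ∫ x, gammaPDFReal a r x * x ^ m
      = ∫ x in Set.Ioi 0, gammaPDFReal a r x * x ^ m := by
    rw [← integral_add_compl (measurableSet_Ici (a := (0:ℝ))) hint]
    have hzero : ∫ x in (Set.Ici (0:ℝ))ᶜ, gammaPDFReal a r x * x ^ m = 0 := by
      rw [Set.compl_Ici]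
      refine setIntegral_eq_zero_of_forall_eq_zero fun x hx => ?_
      rw [gammaPDFReal, if_neg (not_le.mpr hx), zero_mul]
    rw [hzero, add_zero, integral_Ici_eq_integral_Ioi]
  rw [hsplit]
  have h2 : ∫ x in Set.Ioi 0, gammaPDFReal a r x * x ^ m
      = (r ^ a / Real.Gamma a) *
        ∫ x in Set.Ioi 0, x ^ (a + m - 1) * Real.exp (-(r * x)) := by
    rw [← integral_const_mul]
    refine setIntegral_congr_fun measurableSet_Ioi (fun x hx => ?_)
    have hx0 : (0:ℝ) < x := hx
    rw [gammaPDFReal, if_pos hx0.le,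
      show a + m - 1 = (m : ℝ) + (a - 1) by ring, Real.rpow_add hx0,
      Real.rpow_natCast]
    ring
  rw [h2, integral_rpow_mul_exp_neg_mul_Ioi (by positivity) hr,
    my_Gamma_add_nat ha m]
  have hΓ : Real.Gamma a ≠ 0 := (Real.Gamma_pos_of_pos ha).ne'
  have hra : r ^ a ≠ 0 := (Real.rpow_pos_of_pos hr a).ne'
  rw [show (1/r:ℝ) = r⁻¹ from one_div r, Real.rpow_add (by positivity),
    Real.rpow_natCast, Real.inv_rpow hr.le]
  field_simp
  ring_nf
  rw [← mul_pow, mul_inv_cancel₀ hr.ne', one_pow, one_mul]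

lemma my_asc_neg_nat {k : ℕ} : ∀ l ≤ k, (ascPochhammer ℝ l).eval (-(k:ℝ))
    = (-1) ^ l * (l.factorial : ℝ) * (k.choose l : ℝ) := by
  intro l
  induction l with
  | zero => intro _; simp
  | succ l ih =>
      intro h
      have hlk : l < k := h
      rw [ascPochhammer_succ_eval, ih hlk.le]
      have hc : ((k.choose (l+1)) : ℝ) * ((l:ℝ) + 1) = (k.choose l : ℝ) * ((k:ℝ) - l) := by
        have := Nat.choose_succ_right_eq k l
        have hcast : ((k - l : ℕ) : ℝ) = (k:ℝ) - l := by
          rw [Nat.cast_sub hlk.le]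
        calc ((k.choose (l+1)) : ℝ) * ((l:ℝ) + 1)
            = ((k.choose (l+1) * (l+1) : ℕ) : ℝ) := by push_cast; ring
          _ = ((k.choose l * (k - l) : ℕ) : ℝ) := by rw [this]
          _ = (k.choose l : ℝ) * ((k:ℝ) - l) := by push_cast [Nat.cast_sub hlk.le]; ring
      have hf : ((l+1).factorial : ℝ) = ((l:ℝ) + 1) * (l.factorial : ℝ) := by
        push_cast [Nat.factorial_succ]; ring
      rw [pow_succ, hf]
      linear_combination ((-1:ℝ)^l * (l.factorial : ℝ)) * hc

lemma my_asc_split (a : ℝ) {k : ℕ} : ∀ l ≤ k, (ascPochhammer ℝ k).eval a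
    = (ascPochhammer ℝ (k - l)).eval a *
      ((-1) ^ l * (ascPochhammer ℝ l).eval (-(a + k - 1))) := by
  intro l
  induction l with
  | zero => intro _; simp
  | succ l ih =>
      intro h
      have hlk : l < k := h
      have ihe := ih hlk.le
      have hkl : k - l = (k - (l + 1)) + 1 := by omega
      rw [hkl, ascPochhammer_succ_eval] at ihe
      rw [ascPochhammer_succ_eval, ihe]
      have hc : ((k - (l+1) : ℕ) : ℝ) = (k:ℝ) - l - 1 := by
        push_cast [Nat.cast_sub h]; ring
      rw [hc]
      ring

lemma my_asc_prod (a : ℝ) (k : ℕ) :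
    ∏ i ∈ Finset.Icc 1 k, (a + (i : ℝ) - 1) = (ascPochhammer ℝ k).eval a := by
  induction k with
  | zero => simp
  | succ k ih =>
      rw [Finset.prod_Icc_succ_top (Nat.one_le_iff_ne_zero.mpr (Nat.succ_ne_zero k)),
        ih, ascPochhammer_succ_eval]
      push_cast
      ring

/-- Hypergeometric polynomial evaluation of the k-th moment of the gamma
difference distribution. -/
theorem gammaDifference_moment_hypergeometric
    {Ω : Type*} [MeasureSpace Ω] (μ : Measure Ω) [IsProbabilityMeasure μ]
    (α₁ α₂ β₁ β₂ : ℝ) (hα₁ : 0 < α₁) (hα₂ : 0 < α₂) (hβ₁ : 0 < β₁) (hβ₂ : 0 < β₂)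
    (X₁ X₂ : Ω → ℝ) (hX₁ : Measurable X₁) (hX₂ : Measurable X₂)
    (hlaw₁ : μ.map X₁ = gammaMeasure α₁ β₁)
    (hlaw₂ : μ.map X₂ = gammaMeasure α₂ β₂)
    (hindep : IndepFun X₁ X₂ μ) (k : ℕ) (hk : 0 < k)
    (hα₁int : ∀ i ∈ Finset.Icc 1 k, α₁ ≠ (i : ℝ)) :
    (∫ ω, (X₁ ω - X₂ ω) ^ k ∂μ)
      = β₁⁻¹ ^ k * (∏ i ∈ Finset.Icc 1 k, (α₁ + (i : ℝ) - 1)) *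
        ∑ l ∈ Finset.range (k + 1),
          (ascPochhammer ℝ l).eval (-(k : ℝ)) * (ascPochhammer ℝ l).eval α₂
            / ((l.factorial : ℝ) * (ascPochhammer ℝ l).eval (-(α₁ + (k : ℝ) - 1)))
            * (-β₁ / β₂) ^ l := by
  have hpm : ∀ m : ℕ, Measurable fun x : ℝ => x ^ m := fun m => measurable_id.pow_const m
  -- integrability and moments of powers
  have int₁ : ∀ m : ℕ, Integrable (fun ω => X₁ ω ^ m) μ := by
    intro m
    have h := gammaMeasure_pow_integrable hα₁ hβ₁ m
    rw [← hlaw₁, integrable_map_measure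
      (hpm m).aestronglyMeasurable hX₁.aemeasurable] at h
    exact h
  have int₂ : ∀ m : ℕ, Integrable (fun ω => X₂ ω ^ m) μ := by
    intro m
    have h := gammaMeasure_pow_integrable hα₂ hβ₂ m
    rw [← hlaw₂, integrable_map_measure
      (hpm m).aestronglyMeasurable hX₂.aemeasurable] at h
    exact h
  have mom₁ : ∀ m : ℕ, ∫ ω, X₁ ω ^ m ∂μ = (ascPochhammer ℝ m).eval α₁ / β₁ ^ m := by
    intro m
    rw [← gammaMeasure_pow_integral hα₁ hβ₁ m, ← hlaw₁,
      integral_map hX₁.aemeasurable (hpm m).aestronglyMeasurable]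
  have mom₂ : ∀ m : ℕ, ∫ ω, X₂ ω ^ m ∂μ = (ascPochhammer ℝ m).eval α₂ / β₂ ^ m := by
    intro m
    rw [← gammaMeasure_pow_integral hα₂ hβ₂ m, ← hlaw₂,
      integral_map hX₂.aemeasurable (hpm m).aestronglyMeasurable]
  have hip : ∀ i j : ℕ, IndepFun (fun ω => X₁ ω ^ i) (fun ω => X₂ ω ^ j) μ :=
    fun i j => hindep.comp (hpm i) (hpm j)
  -- expand the power
  have hexp : (fun ω => (X₁ ω - X₂ ω) ^ k)
      = fun ω => ∑ m ∈ Finset.range (k + 1),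
          ((-1:ℝ) ^ (m + k) * (k.choose m : ℝ)) * (X₁ ω ^ m * X₂ ω ^ (k - m)) := by
    funext ω
    rw [sub_pow]
    exact Finset.sum_congr rfl fun m _ => by ring
  have hintt : ∀ m ∈ Finset.range (k + 1), Integrable (fun ω =>
      ((-1:ℝ) ^ (m + k) * (k.choose m : ℝ)) * (X₁ ω ^ m * X₂ ω ^ (k - m))) μ := by
    intro m _
    exact ((hip m (k - m)).integrable_mul (int₁ m) (int₂ (k - m))).const_mul _
  rw [hexp, integral_finset_sum _ hintt]
  have hterm : ∀ m ∈ Finset.range (k + 1),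
      ∫ ω, ((-1:ℝ) ^ (m + k) * (k.choose m : ℝ)) * (X₁ ω ^ m * X₂ ω ^ (k - m)) ∂μ
      = ((-1:ℝ) ^ (m + k) * (k.choose m : ℝ)) *
        ((ascPochhammer ℝ m).eval α₁ / β₁ ^ m *
          ((ascPochhammer ℝ (k - m)).eval α₂ / β₂ ^ (k - m))) := by
    intro m _
    rw [integral_const_mul]
    congr 1
    have := (hip m (k - m)).integral_fun_mul_eq_mul_integral (int₁ m).aestronglyMeasurable (int₂ (k - m)).aestronglyMeasurable
    rw [mom₁ m, mom₂ (k - m)] at this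
    exact this
  rw [Finset.sum_congr rfl hterm]
  -- reindex the sum
  rw [← Finset.sum_range_reflect
    (fun m => ((-1:ℝ) ^ (m + k) * (k.choose m : ℝ)) *
        ((ascPochhammer ℝ m).eval α₁ / β₁ ^ m *
          ((ascPochhammer ℝ (k - m)).eval α₂ / β₂ ^ (k - m)))) (k + 1)]
  rw [Finset.mul_sum]
  refine Finset.sum_congr rfl fun l hl => ?_
  rw [Finset.mem_range] at hl
  have hlk : l ≤ k := Nat.lt_succ_iff.mp hl
  have h1 : k + 1 - 1 - l = k - l := by omega
  have h2 : k - (k - l) = l := by omega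
  rw [h1, h2]
  -- algebraic identity
  rw [my_asc_prod α₁ k, my_asc_neg_nat l hlk, my_asc_split α₁ l hlk]
  have hD : (ascPochhammer ℝ l).eval (-(α₁ + (k:ℝ) - 1)) ≠ 0 := by
    intro h0
    have := my_asc_split α₁ l hlk
    rw [h0, mul_zero, mul_zero] at this
    exact (ascPochhammer_pos k α₁ hα₁).ne' this
  have hsign : ((-1:ℝ) ^ (k - l + k)) = (-1:ℝ) ^ l := by
    have : k - l + k = l + 2 * (k - l) := by omega
    rw [this, pow_add, pow_mul]
    simp
  rw [hsign, Nat.choose_symm hlk]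
  have hfac : (l.factorial : ℝ) ≠ 0 := Nat.cast_ne_zero.mpr l.factorial_ne_zero
  have hb1 : β₁ ^ k = β₁ ^ (k - l) * β₁ ^ l := by
    rw [← pow_add, Nat.sub_add_cancel hlk]
  rw [inv_pow, hb1]
  have hneg : (-β₁ / β₂) ^ l = (-1:ℝ)^l * (β₁ ^ l / β₂ ^ l) := by
    rw [neg_div, neg_pow, div_pow]
  rw [hneg]
  set D := Polynomial.eval (-(α₁ + (k:ℝ) - 1)) (ascPochhammer ℝ l) with hDdef
  have hp : β₁ ^ (k - l) ≠ 0 := pow_ne_zero _ hβ₁.ne'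
  have hq : β₁ ^ l ≠ 0 := pow_ne_zero _ hβ₁.ne'
  have hs : β₂ ^ l ≠ 0 := pow_ne_zero _ hβ₂.ne'
  have h3 : (-1:ℝ) ^ (l * 3) = (-1:ℝ) ^ l := by
    rcases Nat.even_or_odd l with h | h
    · rw [pow_mul, h.neg_one_pow]; norm_num
    · rw [pow_mul, h.neg_one_pow]; norm_num
  field_simp
  ring_nf
  rw [pow_mul']; norm_num
end

section
/- Let X = X₁ - X₂ for independent X₁ ~ Gamma(α₁, β₁), X₂ ~ Gamma(α₂, β₂). The two hypergeometric polynomial expressions for the k-th moment are equal: β₁^{-k} (∏_{i=1}^k (α₁+i-1)) ₂F₁(-k, α₂; -(α₁+k-1); -β₁/β₂) = (-1)^k β₂^{-k} (∏_{i=1}^k (α₂+i-1)) ₂F₁(-k, α₁; -(α₂+k-1); -β₂/β₁), where ₂F₁(-k,b;c;z) denotes the terminating series Σ_{l=0}^{k} ((-k)_l (b)_l / (l!(c)_l)) z^l. -/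
open Polynomial Finset

lemma prod_Icc_eq_asc (α : ℝ) (k : ℕ) :
    (∏ i ∈ Finset.Icc 1 k, (α + (i : ℝ) - 1)) = (ascPochhammer ℝ k).eval α := by
  induction k with
  | zero => simp
  | succ n ih =>
    rw [Finset.prod_Icc_succ_top (Nat.le_add_left 1 n), ih, ascPochhammer_succ_eval]
    push_cast; ring

lemma side (α γ β δ : ℝ) (hα : 0 < α) (hβ : 0 < β) (hδ : 0 < δ) (k : ℕ) :
    β⁻¹ ^ k * (∏ i ∈ Finset.Icc 1 k, (α + (i : ℝ) - 1)) *
      (∑ l ∈ Finset.range (k + 1),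
        (ascPochhammer ℝ l).eval (-(k : ℝ)) * (ascPochhammer ℝ l).eval γ
          / ((l.factorial : ℝ) * (ascPochhammer ℝ l).eval (-(α + (k : ℝ) - 1)))
          * (-β / δ) ^ l)
    = ∑ l ∈ Finset.range (k + 1),
        (k.choose l : ℝ) * (ascPochhammer ℝ (k - l)).eval α * (ascPochhammer ℝ l).eval γ
          * (-1 : ℝ) ^ l * β⁻¹ ^ (k - l) * δ⁻¹ ^ l := by
  rw [prod_Icc_eq_asc, mul_assoc, Finset.mul_sum, Finset.mul_sum]
  apply Finset.sum_congr rfl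
  intro l hl
  have hlk : l ≤ k := Nat.lt_succ_iff.mp (Finset.mem_range.mp hl)
  have h1 : (ascPochhammer ℝ l).eval (-(k : ℝ))
      = (-1 : ℝ) ^ l * (k.descFactorial l : ℝ) := by
    rw [ascPochhammer_eval_neg_eq_descPochhammer, descPochhammer_eval_eq_descFactorial]
  have h2 : (ascPochhammer ℝ l).eval (-(α + (k : ℝ) - 1))
      = (-1 : ℝ) ^ l * (ascPochhammer ℝ l).eval (α + ((k - l : ℕ) : ℝ)) := by
    rw [show -(α + (k : ℝ) - 1) = -(α + (k : ℝ) - 1) from rfl,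
      ascPochhammer_eval_neg_eq_descPochhammer, descPochhammer_eval_eq_ascPochhammer]
    congr 2
    push_cast [Nat.cast_sub hlk]
    ring
  have h3 : (ascPochhammer ℝ k).eval α
      = (ascPochhammer ℝ (k - l)).eval α * (ascPochhammer ℝ l).eval (α + ((k - l : ℕ) : ℝ)) := by
    have h := ascPochhammer_mul ℝ (k - l) l
    rw [Nat.sub_add_cancel hlk] at h
    have := congrArg (Polynomial.eval α) h
    rw [Polynomial.eval_mul, Polynomial.eval_comp, Polynomial.eval_add, Polynomial.eval_X,
      Polynomial.eval_natCast] at this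
    exact this.symm
  have h4 : (k.descFactorial l : ℝ) = (l.factorial : ℝ) * (k.choose l : ℝ) := by
    exact_mod_cast congrArg (Nat.cast : ℕ → ℝ) (Nat.descFactorial_eq_factorial_mul_choose k l)
  have hA : 0 < (ascPochhammer ℝ l).eval (α + ((k - l : ℕ) : ℝ)) :=
    ascPochhammer_pos _ _ (by positivity)
  have hfac : (l.factorial : ℝ) ≠ 0 := by exact_mod_cast l.factorial_ne_zero
  have hpow : β⁻¹ ^ k = β⁻¹ ^ (k - l) * β⁻¹ ^ l := by
    rw [← pow_add, Nat.sub_add_cancel hlk]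
  have hneg : (-1 : ℝ) ^ l * (-1 : ℝ) ^ l = 1 := by
    rw [← pow_add, ← two_mul, pow_mul]; norm_num
  have hq : (-β / δ) ^ l = (-1 : ℝ) ^ l * β ^ l / δ ^ l := by
    rw [neg_div, neg_pow, div_pow]; ring
  set A := (ascPochhammer ℝ l).eval (α + ((k - l : ℕ) : ℝ)) with hAdef
  have hA' : A ≠ 0 := hA.ne'
  have hfrac : (-1 : ℝ) ^ l * ((l.factorial : ℝ) * (k.choose l : ℝ)) * (ascPochhammer ℝ l).eval γ
      / ((l.factorial : ℝ) * ((-1 : ℝ) ^ l * A))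
      = (k.choose l : ℝ) * (ascPochhammer ℝ l).eval γ / A := by
    rw [div_eq_div_iff (by positivity) hA']
    ring
  rw [h1, h2, h3, h4, hpow, hq, hfrac]
  field_simp
  have hb : β ^ l * β⁻¹ ^ l = 1 := by rw [← mul_pow, mul_inv_cancel₀ hβ.ne', one_pow]
  have hd : δ ^ l * δ⁻¹ ^ l = 1 := by rw [← mul_pow, mul_inv_cancel₀ hδ.ne', one_pow]
  linear_combination (eval α (ascPochhammer ℝ (k - l)) * (k.choose l : ℝ) * eval γ (ascPochhammer ℝ l)) * hb
    - (eval α (ascPochhammer ℝ (k - l)) * (k.choose l : ℝ) * eval γ (ascPochhammer ℝ l)) * hd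

/-- Equality of the two hypergeometric polynomial expressions for the k-th
moment of the gamma difference distribution. -/
theorem gammaDifference_moment_two_forms
    (α₁ α₂ β₁ β₂ : ℝ) (hα₁ : 0 < α₁) (hα₂ : 0 < α₂) (hβ₁ : 0 < β₁) (hβ₂ : 0 < β₂)
    (k : ℕ)
    (hα₁int : ∀ i ∈ Finset.Icc 1 k, α₁ ≠ (i : ℝ))
    (hα₂int : ∀ i ∈ Finset.Icc 1 k, α₂ ≠ (i : ℝ)) :
    β₁⁻¹ ^ k * (∏ i ∈ Finset.Icc 1 k, (α₁ + (i : ℝ) - 1)) *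
      (∑ l ∈ Finset.range (k + 1),
        (ascPochhammer ℝ l).eval (-(k : ℝ)) * (ascPochhammer ℝ l).eval α₂
          / ((l.factorial : ℝ) * (ascPochhammer ℝ l).eval (-(α₁ + (k : ℝ) - 1)))
          * (-β₁ / β₂) ^ l)
    = (-1) ^ k * β₂⁻¹ ^ k * (∏ i ∈ Finset.Icc 1 k, (α₂ + (i : ℝ) - 1)) *
      (∑ l ∈ Finset.range (k + 1),
        (ascPochhammer ℝ l).eval (-(k : ℝ)) * (ascPochhammer ℝ l).eval α₁
          / ((l.factorial : ℝ) * (ascPochhammer ℝ l).eval (-(α₂ + (k : ℝ) - 1)))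
          * (-β₂ / β₁) ^ l) := by
  have hassoc : ∀ a b c d : ℝ, a * b * c * d = a * (b * c * d) := fun a b c d => by ring
  rw [side α₁ α₂ β₁ β₂ hα₁ hβ₁ hβ₂ k, hassoc, side α₂ α₁ β₂ β₁ hα₂ hβ₂ hβ₁ k,
    Finset.mul_sum,
    ← Finset.sum_range_reflect (fun l => (k.choose l : ℝ)
        * (ascPochhammer ℝ (k - l)).eval α₁ * (ascPochhammer ℝ l).eval α₂
        * (-1 : ℝ) ^ l * β₁⁻¹ ^ (k - l) * β₂⁻¹ ^ l) (k + 1)]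
  refine Finset.sum_congr rfl fun l hl => ?_
  have hlk : l ≤ k := Nat.lt_succ_iff.mp (Finset.mem_range.mp hl)
  rw [show k + 1 - 1 - l = k - l from by omega, show k - (k - l) = l from by omega,
    Nat.choose_symm hlk]
  rw [show (-1 : ℝ) ^ (k - l) = (-1 : ℝ) ^ k * (-1 : ℝ) ^ l by
    rw [← pow_add, show k + l = (k - l) + 2 * l from by omega, pow_add, pow_mul]
    norm_num]
  ring
end

section
/- Let Y be a variance gamma random variable with parameters r > 0, θ ∈ ℝ, σ > 0, i.e. Y = X₁ - X₂ for independent gamma variables with α₁ = α₂ = r/2 and rates β₁, β₂ determined by 1/(β₁β₂) = σ² and 1/β₁ - 1/β₂ = 2θ. Then the moments m_k = E[Y^k] satisfy m_{k+1} = θ(2k + r) m_k + σ² k(r + k - 1) m_{k-1} for k ≥ 0, with m₀ = 1 (and the m_{k-1} term absent when k = 0). -/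
open MeasureTheory ProbabilityTheory Real Finset
open scoped ENNReal NNReal
lemma vg_integrableOn {a b : ℝ} (ha : 0 < a) (hb : 0 < b) (n : ℕ) :
    IntegrableOn (fun x : ℝ => x ^ (a - 1) * Real.exp (-(b * x)) * x ^ n) (Set.Ioi 0) := by
  have h := integrableOn_rpow_mul_exp_neg_mul_rpow (p := 1) (s := a + n - 1) (b := b)
    (by have h : (0:ℝ) ≤ n := Nat.cast_nonneg n; linarith) zero_lt_one hb
  refine h.congr_fun (fun x hx => ?_) measurableSet_Ioi
  have hx : (0:ℝ) < x := hx
  dsimp only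
  rw [Real.rpow_one, show a + (n:ℝ) - 1 = (a - 1) + n by ring, Real.rpow_add hx,
    Real.rpow_natCast, neg_mul]
  ring

lemma vg_gamma_moment {a b : ℝ} (ha : 0 < a) (hb : 0 < b) (n : ℕ) :
    Integrable (fun x => x ^ n) (gammaMeasure a b) ∧
    ∫ x, x ^ n ∂(gammaMeasure a b) = Real.Gamma (a + n) / (Real.Gamma a * b ^ n) := by
  have hmeas : Measurable fun x => (gammaPDFReal a b x).toNNReal :=
    (measurable_gammaPDFReal a b).real_toNNReal
  have hμ : gammaMeasure a b
      = volume.withDensity fun x => ((gammaPDFReal a b x).toNNReal : ℝ≥0∞) := rfl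
  have hfun : (fun x : ℝ => gammaPDFReal a b x * x ^ n)
      = (Set.Ici (0:ℝ)).indicator
        (fun x => b ^ a / Real.Gamma a * (x ^ (a - 1) * Real.exp (-(b * x)) * x ^ n)) := by
    funext x
    simp only [gammaPDFReal, Set.indicator, Set.mem_Ici]
    split_ifs with h
    · ring
    · simp
  have hkey : ∀ g : ℝ → ℝ, (fun x => (gammaPDFReal a b x).toNNReal • g x)
      = fun x => gammaPDFReal a b x * g x := by
    intro g; funext x
    rw [NNReal.smul_def, smul_eq_mul, Real.coe_toNNReal _ (gammaPDFReal_nonneg ha hb x)]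
  have hintOn : IntegrableOn
      (fun x => b ^ a / Real.Gamma a * (x ^ (a - 1) * Real.exp (-(b * x)) * x ^ n))
      (Set.Ici (0:ℝ)) := by
    rw [integrableOn_Ici_iff_integrableOn_Ioi]
    exact (vg_integrableOn ha hb n).const_mul _
  have hint : Integrable (fun x => gammaPDFReal a b x * x ^ n) := by
    rw [hfun]
    exact (integrable_indicator_iff measurableSet_Ici).mpr hintOn
  constructor
  · rw [hμ, integrable_withDensity_iff_integrable_smul hmeas, hkey]
    exact hint
  · rw [hμ, integral_withDensity_eq_integral_smul hmeas,
      show (fun x : ℝ => (gammaPDFReal a b x).toNNReal • (x ^ n)) = _ from hkey (fun x => x ^ n),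
      hfun, integral_indicator measurableSet_Ici, MeasureTheory.integral_Ici_eq_integral_Ioi,
      MeasureTheory.integral_const_mul]
    have hval : ∫ x in Set.Ioi (0:ℝ), x ^ (a - 1) * Real.exp (-(b * x)) * x ^ n
        = (1 / b) ^ (a + n) * Real.Gamma (a + n) := by
      rw [← integral_rpow_mul_exp_neg_mul_Ioi
        (by have h : (0:ℝ) ≤ n := Nat.cast_nonneg n; linarith : 0 < a + n) hb]
      refine setIntegral_congr_fun measurableSet_Ioi (fun x hx => ?_)
      have hx : (0:ℝ) < x := hx
      rw [show a + (n:ℝ) - 1 = (a - 1) + n by ring, Real.rpow_add hx, Real.rpow_natCast]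
      ring
    rw [hval]
    have hg : Real.Gamma a ≠ 0 := (Real.Gamma_pos_of_pos ha).ne'
    have hb' : b ^ (a:ℝ) ≠ 0 := (Real.rpow_pos_of_pos hb a).ne'
    rw [one_div, Real.inv_rpow hb.le, Real.rpow_add hb, Real.rpow_natCast]
    field_simp

lemma vg_Gamma_ratio {a : ℝ} (ha : 0 < a) (n : ℕ) :
    Real.Gamma (a + n) = (∏ i ∈ range n, (a + i)) * Real.Gamma a := by
  induction n with
  | zero => simp
  | succ n ih =>
    have h : a + (n + 1 : ℕ) = (a + n) + 1 := by push_cast; ring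
    rw [h, Real.Gamma_add_one (by positivity : a + (n:ℝ) > 0).ne', ih, prod_range_succ]
    ring

lemma vg_key (α x y : ℝ) (c : ℕ → ℝ)
    (hc : ∀ n : ℕ, c (n + 1) = (α + n) * c n)
    (T : ℕ → ℝ)
    (hT : ∀ k, T k = ∑ j ∈ range (k + 1),
        (k.choose j : ℝ) * (-1) ^ (k - j) * c j * c (k - j) * x ^ j * y ^ (k - j)) :
    ∀ k : ℕ, T (k + 1) = (α + k) * (x - y) * T k
      + (k : ℝ) * (2 * α + k - 1) * x * y * T (k - 1) := by
  intro k
  match k with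
  | 0 =>
    simp only [hT 1, hT 0, Nat.cast_zero]
    simp [Finset.sum_range_succ, hc 0]
    ring
  | (n + 1) =>
    set t : ℕ → ℕ → ℝ := fun k j =>
      (k.choose j : ℝ) * (-1) ^ (k - j) * c j * c (k - j) * x ^ j * y ^ (k - j) with ht
    have e0 : t (n + 2) 0 = -((α + n + 1) * y * t (n + 1) 0) := by
      simp only [ht]
      have h1 : c (n + 2) = (α + (n + 1 : ℕ)) * c (n + 1) := hc (n + 1)
      simp only [Nat.choose_zero_right, Nat.sub_zero, pow_zero, h1]
      push_cast
      rw [pow_succ]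
      ring
    have etop : t (n + 2) (n + 2) = (α + n + 1) * x * t (n + 1) (n + 1) := by
      simp only [ht]
      have h1 : c (n + 2) = (α + (n + 1 : ℕ)) * c (n + 1) := hc (n + 1)
      simp only [Nat.choose_self, Nat.sub_self, pow_zero, h1]
      push_cast
      rw [pow_succ]
      ring
    have eterm : ∀ i ∈ range (n + 1),
        t (n + 2) (i + 1) = (α + n + 1) * x * t (n + 1) i
          - (α + n + 1) * y * t (n + 1) (i + 1)
          + ((n : ℝ) + 1) * (2 * α + n) * x * y * t n i := by
      intro i hi
      rw [mem_range] at hi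
      obtain ⟨d, rfl⟩ : ∃ d, n = i + d := ⟨n - i, by omega⟩
      have h2 : ((i + d + 1) * (i + d).choose i : ℕ)
          = ((i + d + 1).choose (i + 1) * (i + 1) : ℕ) := Nat.add_one_mul_choose_eq (i + d) i
      have h2' : ((i:ℝ) + d + 1) * (i + d).choose i
          = ((i + d + 1).choose (i + 1) : ℝ) * ((i:ℝ) + 1) := by
        exact_mod_cast congrArg (Nat.cast : ℕ → ℝ) h2
      have f2 : ((i + d + 1).choose (i + 1) : ℝ) * ((i:ℝ) + 1)
          = ((i + d).choose i : ℝ) * ((i:ℝ) + d + 1) := by linear_combination -h2'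
      have h3 : ((i + d + 1).choose (i + 1) * (i + 1) : ℕ)
          = ((i + d + 1).choose i * (d + 1) : ℕ) := by
        have h1 := Nat.choose_succ_right_eq (i + d + 1) i
        rwa [show i + d + 1 - i = d + 1 from by omega] at h1
      have h3' : ((i + d + 1).choose (i + 1) : ℝ) * ((i:ℝ) + 1)
          = ((i + d + 1).choose i : ℝ) * ((d:ℝ) + 1) := by
        exact_mod_cast congrArg (Nat.cast : ℕ → ℝ) h3
      have f3 : ((i + d + 1).choose i : ℝ) * ((d:ℝ) + 1)
          = ((i + d).choose i : ℝ) * ((i:ℝ) + d + 1) := by linear_combination f2 - h3'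
      simp only [ht]
      rw [show i + d + 2 - (i + 1) = d + 1 from by omega,
        show i + d + 1 - i = d + 1 from by omega,
        show i + d + 1 - (i + 1) = d from by omega,
        show i + d - i = d from by omega,
        show (i + d + 2).choose (i + 1) = (i + d + 1).choose i + (i + d + 1).choose (i + 1)
          from Nat.choose_succ_succ _ _]
      have hci : c (i + 1) = (α + i) * c i := hc i
      have hcd : c (d + 1) = (α + d) * c d := hc d
      rw [hci, hcd]
      push_cast
      rw [pow_succ ((-1:ℝ)) d, pow_succ x i, pow_succ y d]
      linear_combination
        ((((-1:ℝ)) ^ d * x ^ i * y ^ d * c i * c d * x * y) * (α + i)) * f2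
        + ((((-1:ℝ)) ^ d * x ^ i * y ^ d * c i * c d * x * y) * (α + d)) * f3
    -- now assemble
    have hbig : T (n + 2) = ∑ i ∈ range (n + 1), t (n + 2) (i + 1)
        + t (n + 2) (n + 2) + t (n + 2) 0 := by
      rw [hT (n + 2)]
      rw [Finset.sum_range_succ' (fun j => t (n + 2) j) (n + 2), Finset.sum_range_succ]
    have hx1 : T (n + 1) = ∑ i ∈ range (n + 1), t (n + 1) i + t (n + 1) (n + 1) := by
      rw [hT (n + 1)]; exact Finset.sum_range_succ _ _
    have hy1 : T (n + 1) = ∑ i ∈ range (n + 1), t (n + 1) (i + 1) + t (n + 1) 0 := by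
      rw [hT (n + 1)]; exact Finset.sum_range_succ' _ _
    have hn : T n = ∑ i ∈ range (n + 1), t n i := hT n
    have hsum : ∑ i ∈ range (n + 1), t (n + 2) (i + 1)
        = (α + n + 1) * x * (∑ i ∈ range (n + 1), t (n + 1) i)
          - (α + n + 1) * y * (∑ i ∈ range (n + 1), t (n + 1) (i + 1))
          + ((n : ℝ) + 1) * (2 * α + n) * x * y * (∑ i ∈ range (n + 1), t n i) := by
      rw [Finset.mul_sum, Finset.mul_sum, Finset.mul_sum, ← Finset.sum_sub_distrib,
        ← Finset.sum_add_distrib]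
      exact Finset.sum_congr rfl eterm
    have hrel : (∑ i ∈ range (n + 1), t (n + 1) i) + t (n + 1) (n + 1)
        = (∑ i ∈ range (n + 1), t (n + 1) (i + 1)) + t (n + 1) 0 := by
      rw [← hx1, ← hy1]
    have hcast : ((n + 1 : ℕ) : ℝ) = (n : ℝ) + 1 := by push_cast; ring
    rw [show (n : ℕ) + 1 + 1 = n + 2 from rfl] at *
    rw [hbig, hsum, hcast, show (n + 1 : ℕ) - 1 = n from rfl, hx1, hn, e0, etop]
    linear_combination ((α + (n:ℝ) + 1) * y) * hrel

/-- Three term recurrence for the moments of the variance gamma distribution,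
realized as a gamma difference distribution with α₁ = α₂ = r/2 and
1/(β₁β₂) = σ², 1/β₁ - 1/β₂ = 2θ. -/
theorem varianceGamma_moment_recurrence
    {Ω : Type*} [MeasureSpace Ω] (μ : Measure Ω) [IsProbabilityMeasure μ]
    (r θ σ : ℝ) (hr : 0 < r) (hσ : 0 < σ)
    (β₁ β₂ : ℝ) (hβ₁ : 0 < β₁) (hβ₂ : 0 < β₂)
    (hprod : 1 / (β₁ * β₂) = σ ^ 2) (hdiff : 1 / β₁ - 1 / β₂ = 2 * θ)
    (X₁ X₂ : Ω → ℝ) (hX₁ : Measurable X₁) (hX₂ : Measurable X₂)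
    (hlaw₁ : μ.map X₁ = gammaMeasure (r / 2) β₁)
    (hlaw₂ : μ.map X₂ = gammaMeasure (r / 2) β₂)
    (hindep : IndepFun X₁ X₂ μ)
    (hint : ∀ n : ℕ, Integrable (fun ω => (X₁ ω - X₂ ω) ^ n) μ)
    (m : ℕ → ℝ) (hm : ∀ n : ℕ, m n = ∫ ω, (X₁ ω - X₂ ω) ^ n ∂μ) :
    m 0 = 1 ∧
    ∀ k : ℕ, m (k + 1) = θ * (2 * (k : ℝ) + r) * m k
        + σ ^ 2 * (k : ℝ) * (r + (k : ℝ) - 1) * m (k - 1) := by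
  have ha : (0:ℝ) < r / 2 := by positivity
  set a : ℝ := r / 2 with ha_def
  set c : ℕ → ℝ := fun j => ∏ i ∈ range j, (a + i) with hc_def
  have hΓ : Real.Gamma a ≠ 0 := (Real.Gamma_pos_of_pos ha).ne'
  -- moments of the two marginals
  have hA : ∀ j : ℕ, ∫ ω, X₁ ω ^ j ∂μ = c j * (1 / β₁) ^ j := by
    intro j
    have h1 : ∫ x, x ^ j ∂(μ.map X₁) = ∫ ω, X₁ ω ^ j ∂μ :=
      integral_map hX₁.aemeasurable (measurable_id.pow_const j).aestronglyMeasurable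
    rw [← h1, hlaw₁, (vg_gamma_moment ha hβ₁ j).2, vg_Gamma_ratio ha j, hc_def]
    rw [one_div, inv_pow]
    field_simp
  have hB : ∀ j : ℕ, ∫ ω, X₂ ω ^ j ∂μ = c j * (1 / β₂) ^ j := by
    intro j
    have h1 : ∫ x, x ^ j ∂(μ.map X₂) = ∫ ω, X₂ ω ^ j ∂μ :=
      integral_map hX₂.aemeasurable (measurable_id.pow_const j).aestronglyMeasurable
    rw [← h1, hlaw₂, (vg_gamma_moment ha hβ₂ j).2, vg_Gamma_ratio ha j, hc_def]
    rw [one_div, inv_pow]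
    field_simp
  have hIntA : ∀ j : ℕ, Integrable (fun ω => X₁ ω ^ j) μ := by
    intro j
    have h := (vg_gamma_moment ha hβ₁ j).1
    rw [← hlaw₁] at h
    exact (integrable_map_measure (measurable_id.pow_const j).aestronglyMeasurable
      hX₁.aemeasurable).mp h
  have hIntB : ∀ j : ℕ, Integrable (fun ω => X₂ ω ^ j) μ := by
    intro j
    have h := (vg_gamma_moment ha hβ₂ j).1
    rw [← hlaw₂] at h
    exact (integrable_map_measure (measurable_id.pow_const j).aestronglyMeasurable
      hX₂.aemeasurable).mp h
  have hIndepPow : ∀ j l : ℕ, IndepFun (fun ω => X₁ ω ^ j) (fun ω => X₂ ω ^ l) μ :=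
    fun j l => hindep.comp (measurable_id.pow_const j) (measurable_id.pow_const l)
  have hProdInt : ∀ j l : ℕ, Integrable (fun ω => X₁ ω ^ j * X₂ ω ^ l) μ :=
    fun j l => (hIndepPow j l).integrable_mul (hIntA j) (hIntB l)
  have hfact : ∀ j l : ℕ, ∫ ω, X₁ ω ^ j * X₂ ω ^ l ∂μ
      = (∫ ω, X₁ ω ^ j ∂μ) * (∫ ω, X₂ ω ^ l ∂μ) :=
    fun j l => (hIndepPow j l).integral_fun_mul_eq_mul_integral (hIntA j).1 (hIntB l).1
  -- m equals the binomial sum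
  have hmT : ∀ k : ℕ, m k = ∑ j ∈ range (k + 1),
      (k.choose j : ℝ) * (-1) ^ (k - j) * c j * c (k - j)
        * (1 / β₁) ^ j * (1 / β₂) ^ (k - j) := by
    intro k
    rw [hm k]
    have hexp : (fun ω => (X₁ ω - X₂ ω) ^ k) = fun ω => ∑ j ∈ range (k + 1),
        (-1 : ℝ) ^ (j + k) * X₁ ω ^ j * X₂ ω ^ (k - j) * (k.choose j : ℝ) := by
      funext ω; exact sub_pow _ _ k
    rw [hexp, integral_finset_sum]
    · refine Finset.sum_congr rfl fun j hj => ?_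
      rw [mem_range] at hj
      have hjk : j ≤ k := by omega
      have hsgn : ((-1:ℝ)) ^ (j + k) = (-1) ^ (k - j) := by
        rw [show j + k = (k - j) + 2 * j from by omega, pow_add, pow_mul]
        norm_num
      have hre : (fun ω => (-1 : ℝ) ^ (j + k) * X₁ ω ^ j * X₂ ω ^ (k - j) * (k.choose j : ℝ))
          = fun ω => ((-1 : ℝ) ^ (j + k) * (k.choose j : ℝ)) * (X₁ ω ^ j * X₂ ω ^ (k - j)) := by
        funext ω; ring
      rw [hre, integral_const_mul, hfact j (k - j), hA j, hB (k - j), hsgn]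
      ring
    · intro j hj
      exact ((hProdInt j (k - j)).const_mul ((-1 : ℝ) ^ (j + k))).mul_const (k.choose j : ℝ)
        |>.congr (Filter.Eventually.of_forall fun ω => by ring)
  have hc : ∀ n : ℕ, c (n + 1) = (a + n) * c n := by
    intro n
    show (∏ i ∈ range (n + 1), (a + (i:ℝ))) = (a + n) * ∏ i ∈ range n, (a + (i:ℝ))
    rw [prod_range_succ]; ring
  have hkey := vg_key a (1 / β₁) (1 / β₂) c hc m hmT
  constructor
  · rw [hm 0]
    simp
  · intro k
    rw [hkey k]
    have h1 : (a + k) * (1 / β₁ - 1 / β₂) = θ * (2 * (k : ℝ) + r) := by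
      rw [hdiff, ha_def]; ring
    have h2 : (1 / β₁) * (1 / β₂) = σ ^ 2 := by
      rw [div_mul_div_comm, one_mul, hprod]
    have h3 : (k : ℝ) * (2 * a + k - 1) * (1 / β₁) * (1 / β₂)
        = σ ^ 2 * (k : ℝ) * (r + (k : ℝ) - 1) := by
      rw [mul_assoc, h2, ha_def]; ring
    linear_combination m k * h1 + m (k - 1) * h3
end
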